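/- arXiv:1602.02801 — 9 statements merged into one kernel-verified Lean document; each statement's English description precedes it below -/
import Mathlib

section
/- Let A be a commutative ring with no zero divisors, let d : A → A be a derivation (an additive map satisfying the Leibniz rule d(ab) = a·d(b) + d(a)·b), let R = {a ∈ A : d(a) = 0} be its subring of constants, and let z ∈ A satisfy d(z) = 1. Let (α_i)_{i∈I} be a family of pairwise distinct elements of R and (e_i)_{i∈I} a family of elements of A such that for every i ∈ I one has e_i ≠ 0 and d(e_i) = α_i · e_i. Then the family (e_i)_{i∈I} is linearly independent over the subring R[z] of A generated by R ∪ {z}. -/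
section Aux

variable {A : Type*} [CommRing A] {d : A → A}
    (hadd : ∀ a b : A, d (a + b) = d a + d b)
    (hleib : ∀ a b : A, d (a * b) = a * d b + d a * b)

include hadd in
private lemma d_zero' : d 0 = 0 := by
  have h := hadd 0 0
  rw [add_zero] at h
  exact (left_eq_add.mp h)

include hleib in
private lemma d_one' : d 1 = 0 := by
  have h := hleib 1 1
  rw [mul_one, one_mul, mul_one] at h
  exact (left_eq_add.mp h)

include hadd in
private lemma iter_zero' : ∀ n, d^[n] 0 = 0 := fun n =>
  Function.iterate_fixed (d_zero' hadd) n

include hadd in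
private lemma iter_add' : ∀ n (a b : A), d^[n] (a + b) = d^[n] a + d^[n] b := by
  intro n
  induction n with
  | zero => intro a b; simp
  | succ n ih =>
      intro a b
      simp only [Function.iterate_succ_apply]
      rw [hadd, ih]

include hadd in
private lemma iter_neg' : ∀ n (a : A), d^[n] (-a) = -d^[n] a := by
  intro n a
  have h : d^[n] (-a) + d^[n] a = 0 := by
    rw [← iter_add' hadd, neg_add_cancel, iter_zero' hadd]
  linear_combination h

include hadd in
private lemma iter_mono' {a : A} {m : ℕ} (h : d^[m] a = 0) {n : ℕ} (hmn : m ≤ n) :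
    d^[n] a = 0 := by
  obtain ⟨k, rfl⟩ := Nat.exists_eq_add_of_le hmn
  rw [add_comm, Function.iterate_add_apply, h, iter_zero' hadd]

include hadd hleib in
private lemma iter_mul' : ∀ k m n (a b : A), m + n ≤ k →
    d^[m] a = 0 → d^[n] b = 0 → d^[m + n] (a * b) = 0 := by
  intro k
  induction k with
  | zero =>
      intro m n a b hk ha hb
      have hm : m = 0 := by omega
      have hn : n = 0 := by omega
      subst hm; subst hn
      simp only [Function.iterate_zero, id_eq] at ha hb
      show a * b = 0
      rw [ha, zero_mul]

  | succ k ih =>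
      intro m n a b hk ha hb
      match m, n with
      | 0, n =>
          simp only [Function.iterate_zero, id_eq] at ha
          rw [ha, zero_mul, zero_add, iter_zero' hadd]
      | m + 1, 0 =>
          simp only [Function.iterate_zero, id_eq] at hb
          rw [hb, mul_zero, iter_zero' hadd]
      | m + 1, n + 1 =>
          have e1 : (m + 1) + (n + 1) = ((m + 1) + n) + 1 := by ring
          rw [e1, Function.iterate_succ_apply, hleib a b, iter_add' hadd]
          have h1 : d^[(m + 1) + n] (a * d b) = 0 := by
            apply ih (m + 1) n a (d b) (by omega) ha
            rw [← Function.iterate_succ_apply]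
            exact hb
          have h2 : d^[m + (n + 1)] (d a * b) = 0 := by
            apply ih m (n + 1) (d a) b (by omega) _ hb
            rw [← Function.iterate_succ_apply]
            exact ha
          rw [h1]
          rw [show (m + 1) + n = m + (n + 1) by ring, h2, add_zero]

include hleib in
private lemma d_pow_const' {β : A} (hβ : d β = 0) : ∀ n, d (β ^ n) = 0 := by
  intro n
  induction n with
  | zero => simpa using d_one' hleib
  | succ n ih =>
      rw [pow_succ, hleib, ih, hβ]
      ring

include hleib in
private lemma iter_eigen' {β c : A} (hβ : d β = 0) (hc : d c = β * c) :
    ∀ n, d^[n] c = β ^ n * c := by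
  intro n
  induction n with
  | zero => simp
  | succ n ih =>
      rw [Function.iterate_succ_apply', ih, hleib, hc, d_pow_const' hleib hβ]
      ring

end Aux

/-- Let `A` be a commutative ring with no zero divisors, `d` a derivation
on `A` (additive and satisfying the Leibniz rule), `R = ker d` its subring of constants,
and `z ∈ A` with `d z = 1`. If `(α i)` is a family of pairwise distinct constants and
`(e i)` a family of nonzero elements with `d (e i) = α i * e i`, then the `e i` are
linearly independent over the subring `R[z]` generated by `R ∪ {z}`. -/
theorem kleene_star_eigenfunctions_linearly_independent
    (A : Type*) [CommRing A]
    (hnzd : ∀ a b : A, a * b = 0 → a = 0 ∨ b = 0)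
    (d : A → A)
    (hadd : ∀ a b : A, d (a + b) = d a + d b)
    (hleib : ∀ a b : A, d (a * b) = a * d b + d a * b)
    (z : A) (hz : d z = 1)
    {I : Type*} (α : I → A) (e : I → A)
    (hα_const : ∀ i, d (α i) = 0)
    (hα_inj : Function.Injective α)
    (he_ne : ∀ i, e i ≠ 0)
    (he_eig : ∀ i, d (e i) = α i * e i) :
    ∀ (s : Finset I) (c : I → A),
      (∀ i ∈ s, c i ∈ Subring.closure ({a : A | d a = 0} ∪ {z})) →
      (∑ i ∈ s, c i * e i = 0) →
      ∀ i ∈ s, c i = 0 := by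
  classical
  -- the derivation as an additive hom
  let dh : A →+ A := { toFun := d, map_zero' := d_zero' hadd, map_add' := hadd }
  have hdh : ∀ a : A, dh a = d a := fun a => rfl
  have hdsub : ∀ a b : A, d (a - b) = d a - d b := by
    intro a b
    rw [← hdh, ← hdh, ← hdh, map_sub]
  -- every element of the closure is d-nilpotent
  have hnilp : ∀ x ∈ Subring.closure ({a : A | d a = 0} ∪ {z}), ∃ n, d^[n] x = 0 := by
    intro x hx
    induction hx using Subring.closure_induction with
    | mem x hx =>
        rcases hx with hx | hx
        · exact ⟨1, hx⟩
        · refine ⟨2, ?_⟩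
          simp only [Set.mem_singleton_iff] at hx
          rw [hx]
          show d (d z) = 0
          rw [hz]
          exact d_one' hleib
    | zero => exact ⟨0, rfl⟩
    | one => exact ⟨1, d_one' hleib⟩
    | add x y hx hy ihx ihy =>
        obtain ⟨m, hm⟩ := ihx
        obtain ⟨n, hn⟩ := ihy
        exact ⟨m + n, by rw [iter_add' hadd,
          iter_mono' hadd hm (Nat.le_add_right m n),
          iter_mono' hadd hn (Nat.le_add_left n m), add_zero]⟩
    | neg x hx ihx =>
        obtain ⟨m, hm⟩ := ihx
        exact ⟨m, by rw [iter_neg' hadd, hm, neg_zero]⟩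
    | mul x y hx hy ihx ihy =>
        obtain ⟨m, hm⟩ := ihx
        obtain ⟨n, hn⟩ := ihy
        exact ⟨m + n, iter_mul' hadd hleib (m + n) m n x y le_rfl hm hn⟩
  -- main claim, for d-nilpotent coefficients
  have main : ∀ s : Finset I, ∀ c : I → A, (∀ i ∈ s, ∃ n, d^[n] (c i) = 0) →
      (∑ i ∈ s, c i * e i = 0) → ∀ i ∈ s, c i = 0 := by
    intro s
    induction s using Finset.strongInduction with
    | _ s ihs =>
      intro c hc hsum
      rcases Finset.eq_empty_or_nonempty s with rfl | ⟨j, hj⟩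
      · intro i hi; exact absurd hi (by simp)
      · -- inner induction on the vanishing order of c j
        have inner : ∀ m, ∀ c : I → A, (∀ i ∈ s, ∃ n, d^[n] (c i) = 0) →
            d^[m] (c j) = 0 → (∑ i ∈ s, c i * e i = 0) → ∀ i ∈ s, c i = 0 := by
          intro m
          induction m with
          | zero =>
              intro c hc hcj hsum
              simp only [Function.iterate_zero, id_eq] at hcj
              have hrest : ∑ i ∈ s.erase j, c i * e i = 0 := by
                rw [← Finset.add_sum_erase s _ hj, hcj, zero_mul, zero_add] at hsum
                exact hsum
              have hall := ihs (s.erase j) (Finset.erase_ssubset hj) c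
                (fun i hi => hc i (Finset.mem_of_mem_erase hi)) hrest
              intro i hi
              by_cases hij : i = j
              · rw [hij, hcj]
              · exact hall i (Finset.mem_erase.mpr ⟨hij, hi⟩)
          | succ m ihm =>
              intro c hc hcj hsum
              set c' : I → A := fun i => d (c i) + (α i - α j) * c i with hc'def
              have hsum' : ∑ i ∈ s, c' i * e i = 0 := by
                have h1 : ∑ i ∈ s, (d (c i * e i) - α j * (c i * e i)) = 0 := by
                  rw [Finset.sum_sub_distrib, ← Finset.mul_sum, hsum, mul_zero, sub_zero]
                  have h2 : ∑ i ∈ s, d (c i * e i) = dh (∑ i ∈ s, c i * e i) :=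
                    (map_sum dh _ s).symm
                  rw [h2, hsum, map_zero]
                rw [← h1]
                apply Finset.sum_congr rfl
                intro i hi
                show (d (c i) + (α i - α j) * c i) * e i = _
                rw [hleib, he_eig]
                ring
              have hc' : ∀ i ∈ s, ∃ n, d^[n] (c' i) = 0 := by
                intro i hi
                obtain ⟨n, hn⟩ := hc i hi
                refine ⟨n + n + 1, ?_⟩
                show d^[n + n + 1] (d (c i) + (α i - α j) * c i) = 0
                rw [iter_add' hadd]
                have hd : d^[n] (d (c i)) = 0 := by
                  cases n with
                  | zero =>
                      simp only [Function.iterate_zero, id_eq] at hn ⊢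
                      rw [hn, d_zero' hadd]
                  | succ n =>
                      rw [← Function.iterate_succ_apply]
                      exact iter_mono' hadd hn (by omega)
                have hβ : d^[1] (α i - α j) = 0 := by
                  simp only [Function.iterate_one]
                  rw [hdsub, hα_const, hα_const, sub_zero]
                rw [iter_mono' hadd hd (by omega : n ≤ n + n + 1),
                  iter_mono' hadd (iter_mul' hadd hleib (1 + n) 1 n _ _ le_rfl hβ hn)
                    (by omega : 1 + n ≤ n + n + 1), add_zero]
              have hc'j : d^[m] (c' j) = 0 := by
                have h3 : c' j = d (c j) := by
                  show d (c j) + (α j - α j) * c j = d (c j)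
                  ring
                rw [h3, ← Function.iterate_succ_apply]
                exact hcj
              have hall' := ihm c' hc' hc'j hsum'
              -- for i ≠ j, c i is an eigenvector, hence 0
              have hzero : ∀ i ∈ s, i ≠ j → c i = 0 := by
                intro i hi hij
                have h0 := hall' i hi
                have h0' : d (c i) + (α i - α j) * c i = 0 := h0
                have heig : d (c i) = (α j - α i) * c i := by linear_combination h0'
                obtain ⟨n, hn⟩ := hc i hi
                cases n with
                | zero => simpa using hn
                | succ n =>
                    have hβc : d (α j - α i) = 0 := by
                      rw [hdsub, hα_const, hα_const, sub_zero]
                    have h4 := iter_eigen' hleib hβc heig (n + 1)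
                    rw [hn] at h4
                    rcases hnzd _ _ h4.symm with hpow | hci
                    · exfalso
                      have hNZD : NoZeroDivisors A := ⟨fun {a b} h => hnzd a b h⟩
                      have h5 : α j - α i = 0 :=
                        pow_eq_zero_iff (Nat.succ_ne_zero n) |>.mp hpow
                      exact hij (hα_inj (sub_eq_zero.mp h5)).symm
                    · exact hci
              intro i hi
              by_cases hij : i = j
              · subst hij
                have h6 : c i * e i = 0 := by
                  rw [← Finset.add_sum_erase s _ hi, Finset.sum_eq_zero, add_zero] at hsum
                  · exact hsum
                  · intro k hk
                    rw [hzero k (Finset.mem_of_mem_erase hk)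
                      (Finset.ne_of_mem_erase hk), zero_mul]
                rcases hnzd _ _ h6 with h | h
                · exact h
                · exact absurd h (he_ne i)
              · exact hzero i hi hij
        obtain ⟨m, hm⟩ := hc j hj
        exact inner m c hc hm hsum
  intro s c hc hsum
  exact main s c (fun i hi => hnilp (c i) (hc i hi)) hsum
end

section
/- Let A be a commutative integral domain of characteristic zero, let d : A → A be a derivation, let R = {a ∈ A : d(a) = 0} be its subring of constants, and let z ∈ A satisfy d(z) = 1. Then z is transcendental over R; that is, for every nonzero polynomial p with all coefficients in R, the element Σ_k p_k z^k of A is nonzero. -/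
/-!
If `D z ≠ 0` and `p` is a polynomial of least degree with constant coefficients and `p(z) = 0`,
then `0 = D (p(z)) = p'(z) · D z`, so `p'(z) = 0`. In characteristic zero `p'` is again nonzero
with constant coefficients and of smaller degree, unless `p` is a nonzero constant.
-/

open Polynomial

namespace Derivation

variable {A : Type*} [CommRing A]

def ofAddLeibniz (d : A → A) (hadd : ∀ a b, d (a + b) = d a + d b)
    (hleib : ∀ a b, d (a * b) = a * d b + d a * b) : Derivation ℤ A A :=
  mk' (AddMonoidHom.mk' d hadd).toIntLinearMap fun a b => by
    simp [hleib, mul_comm]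

variable {R : Type*} [CommRing R] [Algebra R A] (D : Derivation R A A)

theorem apply_eval_of_apply_coeff_eq_zero {p : A[X]} (hp : ∀ k, D (p.coeff k) = 0) (x : A) :
    D (p.eval x) = (derivative p).eval x * D x := by
  have hcoeffs : D.mapCoeffs p = 0 := by ext k; simp [hp]
  simp [apply_eval_eq, hcoeffs]

theorem apply_coeff_derivative_eq_zero {p : A[X]} (hp : ∀ k, D (p.coeff k) = 0) (k : ℕ) :
    D ((derivative p).coeff k) = 0 := by
  rw [coeff_derivative, ← Nat.cast_succ, leibniz, hp, map_natCast]
  simp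

theorem eval_ne_zero_of_apply_ne_zero [NoZeroDivisors A] [IsAddTorsionFree A] {x : A}
    (hx : D x ≠ 0) {p : A[X]} (hp0 : p ≠ 0) (hp : ∀ k, D (p.coeff k) = 0) :
    p.eval x ≠ 0 := by
  induction h : p.natDegree using Nat.strong_induction_on generalizing p with
  | _ n ih =>
  intro hpx
  rcases eq_or_ne n 0 with rfl | hn
  · rw [eq_C_of_natDegree_eq_zero h, eval_C] at hpx
    exact hp0 (by rw [eq_C_of_natDegree_eq_zero h, hpx, map_zero])
  · have hp'x : (derivative p).eval x = 0 := by
      have hDpx := D.apply_eval_of_apply_coeff_eq_zero hp x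
      rw [hpx, map_zero, eq_comm, mul_eq_zero] at hDpx
      exact hDpx.resolve_right hx
    have hp'0 : derivative p ≠ 0 := fun h0 => hn (h ▸ derivative_eq_zero.mp h0)
    exact ih _ (h ▸ natDegree_derivative_lt (h ▸ hn)) hp'0
      (D.apply_coeff_derivative_eq_zero hp) rfl hp'x

end Derivation

/-- Let `A` be a commutative integral domain of characteristic zero,
`d` a derivation on `A`, `R = ker d` the subring of constants, and `z ∈ A` with `d z = 1`.
Then `z` is transcendental over `R`: no nonzero polynomial with constant coefficients
vanishes at `z`. -/
theorem primitive_of_one_is_transcendental_over_constants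
    (A : Type*) [CommRing A] [IsDomain A] [CharZero A]
    (d : A → A)
    (hadd : ∀ a b : A, d (a + b) = d a + d b)
    (hleib : ∀ a b : A, d (a * b) = a * d b + d a * b)
    (z : A) (hz : d z = 1) :
    ∀ p : Polynomial A, p ≠ 0 → (∀ k : ℕ, d (p.coeff k) = 0) →
      Polynomial.eval z p ≠ 0 := fun _ hp0 hp =>
  (Derivation.ofAddLeibniz d hadd hleib).eval_ne_zero_of_apply_ne_zero
    (hz.trans_ne one_ne_zero) hp0 hp
end

section
/- In the ring of multivariate formal power series ℂ[[X₀, X₁, X₂, …]] over countably many variables (X_n)_{n∈ℕ}, let E_i = Σ_{k≥0} X_i^k/k! denote the exponential of the variable X_i. Then the family consisting of all the variables (X_n)_{n∈ℕ} together with E₀ and E₁ is algebraically independent over ℂ; equivalently, E₀ = e^{X₀} and E₁ = e^{X₁} are algebraically independent over the polynomial subalgebra ℂ[X₀, X₁, X₂, …]. -/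
/-!
For `D = ∂/∂X_i` and a power series `c` killed by some power of `D`, the product `c * e^{a X_i}`
lies in the generalized eigenspace of `D` for the eigenvalue `a`, because
`(D - a) (c * e^{a X_i}) = D c * e^{a X_i}`. Generalized eigenspaces for distinct eigenvalues are
independent, so every term of a relation `∑ c_a (e^{X_i})^a = 0` vanishes: `e^{X_i}` is
transcendental over any algebra on which `D` is locally nilpotent. This applies to `e^{X_0}` over
`ℂ[X_0, X_1, …]` and to `e^{X_1}` over `ℂ[X_0, X_1, …, e^{X_0}]`.
-/

/-- The exponential `e^{X_i}` of the variable `X_i` in `ℂ[[X₀, X₁, …]]`: its coefficient at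
the monomial `X_i^k` is `1/k!` and its coefficient at any monomial involving another
variable is `0`. -/
noncomputable def expVar (i : ℕ) : MvPowerSeries ℕ ℂ :=
  fun m => if m = Finsupp.single i (m i) then 1 / (Nat.factorial (m i) : ℂ) else 0

namespace Derivation

variable {K A : Type*} [CommRing K] [CommRing A] [Algebra K A] (D : Derivation K A A)

theorem pow_apply_mul_eq_zero {x y : A} {m n : ℕ} (hx : ((D : Module.End K A) ^ m) x = 0)
    (hy : ((D : Module.End K A) ^ n) y = 0) : ((D : Module.End K A) ^ (m + n)) (x * y) = 0 := by
  induction h : m + n generalizing x y m n with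
  | zero =>
    obtain ⟨rfl, rfl⟩ : m = 0 ∧ n = 0 := by omega
    simp_all
  | succ k ih =>
    rcases m with _ | m
    · simp_all
    rcases n with _ | n
    · simp_all
    have hDx : ((D : Module.End K A) ^ m) (D x) = 0 := by rwa [pow_succ] at hx
    have hDy : ((D : Module.End K A) ^ n) (D y) = 0 := by rwa [pow_succ] at hy
    rw [pow_succ, Module.End.mul_apply, coeFn_coe, leibniz, smul_eq_mul, smul_eq_mul,
      map_add, ih hx hDy (by omega), ih hy hDx (by omega), add_zero]

def locallyNilpotentSubalgebra : Subalgebra K A :=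
  (Module.End.maxGenEigenspace (D : Module.End K A) 0).toSubalgebra
    ((Module.End.mem_maxGenEigenspace _ _ _).mpr ⟨1, by simp⟩)
    fun x y hx hy => by
      simp only [Module.End.mem_maxGenEigenspace, zero_smul, sub_zero] at hx hy ⊢
      obtain ⟨m, hm⟩ := hx
      obtain ⟨n, hn⟩ := hy
      exact ⟨m + n, D.pow_apply_mul_eq_zero hm hn⟩

theorem mem_locallyNilpotentSubalgebra {x : A} :
    x ∈ D.locallyNilpotentSubalgebra ↔ ∃ n, ((D : Module.End K A) ^ n) x = 0 := by
  simp [locallyNilpotentSubalgebra]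

theorem mem_locallyNilpotentSubalgebra_of_apply_eq_zero {x : A} (hx : D x = 0) :
    x ∈ D.locallyNilpotentSubalgebra :=
  D.mem_locallyNilpotentSubalgebra.mpr ⟨1, by rwa [pow_one]⟩

theorem pow_sub_smul_apply_mul {y : A} {μ : K} (hy : D y = μ • y) (x : A) (k : ℕ) :
    (((D : Module.End K A) - μ • 1) ^ k) (x * y) = ((D : Module.End K A) ^ k) x * y := by
  induction k with
  | zero => simp
  | succ k ih =>
    rw [pow_succ', Module.End.mul_apply, ih, pow_succ', Module.End.mul_apply]
    simp [leibniz, hy, mul_comm y]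

theorem mul_mem_maxGenEigenspace {x y : A} {μ : K} (hx : x ∈ D.locallyNilpotentSubalgebra)
    (hy : D y = μ • y) : x * y ∈ Module.End.maxGenEigenspace (D : Module.End K A) μ := by
  obtain ⟨n, hn⟩ := D.mem_locallyNilpotentSubalgebra.mp hx
  exact (Module.End.mem_maxGenEigenspace _ _ _).mpr
    ⟨n, by rw [D.pow_sub_smul_apply_mul hy, hn, zero_mul]⟩

theorem apply_pow_of_apply_eq_self {f : A} (hf : D f = f) (n : ℕ) :
    D (f ^ n) = (n : K) • f ^ n := by
  rw [leibniz_pow, hf]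
  rcases n with _ | n
  · simp
  · rw [smul_eq_mul, ← pow_succ, Nat.add_sub_cancel, Nat.cast_smul_eq_nsmul]

theorem transcendental_locallyNilpotentSubalgebra [IsDomain K] [CharZero K] [NoZeroDivisors A]
    [Module.IsTorsionFree K A] {f : A} (hf0 : f ≠ 0) (hf : D f = f) :
    Transcendental D.locallyNilpotentSubalgebra f := by
  rw [transcendental_iff]
  intro p hp
  rw [Polynomial.aeval_eq_sum_range] at hp
  have hterm := (iSupIndep_iff_finsetSum_eq_zero_imp_eq_zero _).mp
    ((Module.End.independent_maxGenEigenspace (D : Module.End K A)).comp Nat.cast_injective)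
    _ _ (fun a _ => D.mul_mem_maxGenEigenspace (p.coeff a).2 (D.apply_pow_of_apply_eq_self hf a))
    hp
  refine Polynomial.ext fun a => ?_
  rcases lt_or_ge p.natDegree a with ha | ha
  · exact Polynomial.coeff_eq_zero_of_natDegree_lt ha
  · have := hterm a (Finset.mem_range.mpr (Nat.lt_succ_of_le ha))
    rw [mul_eq_zero, or_iff_left (pow_ne_zero a hf0)] at this
    exact_mod_cast this

end Derivation

namespace MvPowerSeries

theorem algebraicIndependent_X (σ R : Type*) [CommRing R] :
    AlgebraicIndependent R (X : σ → MvPowerSeries σ R) := by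
  have := (MvPolynomial.algebraicIndependent_X σ R).map'
    (f := MvPolynomial.coeToMvPowerSeries.algHom (σ := σ) (R := R) R) ?_
  · convert this using 1
    ext n : 1
    simp [MvPolynomial.coeToMvPowerSeries.algHom_apply]
  · intro p q h
    simpa [MvPolynomial.coeToMvPowerSeries.algHom_apply] using h

theorem X_mem_locallyNilpotentSubalgebra_pderiv {σ R : Type*} [CommRing R] (i j : σ) :
    X j ∈ (pderiv R i).locallyNilpotentSubalgebra := by
  refine (pderiv R i).mem_locallyNilpotentSubalgebra.mpr ⟨2, ?_⟩
  rw [pow_two, Module.End.mul_apply, Derivation.coeFn_coe]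
  by_cases h : j = i
  · rw [h, pderiv_X_self, pderiv_one]
  · rw [pderiv_X_of_ne h, map_zero]

end MvPowerSeries

open MvPowerSeries

theorem coeff_expVar (i : ℕ) (m : ℕ →₀ ℕ) :
    coeff m (expVar i) = if m = Finsupp.single i (m i) then 1 / ((m i).factorial : ℂ) else 0 :=
  rfl

theorem expVar_ne_zero (i : ℕ) : expVar i ≠ 0 := fun h => by
  simpa [coeff_expVar] using congrArg (coeff 0) h

theorem pderiv_expVar_self (i : ℕ) : pderiv ℂ i (expVar i) = expVar i := by
  ext n
  rw [coeff_pderiv, coeff_expVar, coeff_expVar]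
  simp only [Finsupp.add_apply, Finsupp.single_eq_same, Finsupp.single_add, add_left_inj]
  split_ifs
  · push_cast [Nat.factorial_succ]
    field_simp
  · simp

theorem pderiv_expVar_of_ne {i j : ℕ} (h : j ≠ i) : pderiv ℂ i (expVar j) = 0 := by
  ext n
  rw [coeff_pderiv, coeff_expVar, if_neg, zero_mul, map_zero]
  intro hn
  simpa [Finsupp.single_apply, h] using DFunLike.congr_fun hn i

theorem transcendental_expVar_adjoin {i : ℕ} {s : Set (MvPowerSeries ℕ ℂ)}
    (hs : s ⊆ (pderiv ℂ i).locallyNilpotentSubalgebra) :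
    Transcendental (Algebra.adjoin ℂ s) (expVar i) :=
  ((pderiv ℂ i).transcendental_locallyNilpotentSubalgebra (expVar_ne_zero i)
    (pderiv_expVar_self i)).of_tower_top_of_subalgebra_le (Algebra.adjoin_le hs)

/-- In `ℂ[[X₀, X₁, X₂, …]]`, the family consisting of all the variables
`(X_n)_{n∈ℕ}` together with `E₀ = e^{X₀}` and `E₁ = e^{X₁}` is algebraically independent
over `ℂ`. -/
theorem variables_and_two_exponentials_algebraically_independent :
    AlgebraicIndependent ℂ
      (Sum.elim (fun n : ℕ => (MvPowerSeries.X n : MvPowerSeries ℕ ℂ))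
        (fun j : Fin 2 => expVar (j : ℕ))) := by
  set g := Sum.elim (fun n : ℕ => (MvPowerSeries.X n : MvPowerSeries ℕ ℂ))
    (fun j : Fin 2 => expVar (j : ℕ))
  have hX : AlgebraicIndepOn ℂ g (Set.range Sum.inl) :=
    (algebraicIndependent_equiv' (Equiv.ofInjective _ Sum.inl_injective)
      (funext fun _ => rfl)).mp (algebraicIndependent_X ℕ ℂ)
  have huniv : (Set.univ : Set (ℕ ⊕ Fin 2)) =
      insert (Sum.inr 1) (insert (Sum.inr 0) (Set.range Sum.inl)) := by
    ext (n | j)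
    · simp
    · fin_cases j <;> simp
  rw [← AlgebraicIndepOn.univ, huniv]
  refine .insert (.insert hX (transcendental_expVar_adjoin ?_)) (transcendental_expVar_adjoin ?_)
  · rintro _ ⟨_, ⟨n, rfl⟩, rfl⟩
    exact X_mem_locallyNilpotentSubalgebra_pderiv 0 n
  · rintro _ ⟨_, rfl | ⟨n, rfl⟩, rfl⟩
    · exact (pderiv ℂ 1).mem_locallyNilpotentSubalgebra_of_apply_eq_zero
        (pderiv_expVar_of_ne zero_ne_one)
    · exact X_mem_locallyNilpotentSubalgebra_pderiv 1 n
end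

section
/- Let σ be any type (an alphabet of commuting variables) and k a field of characteristic zero. In the multivariate formal power series ring k[[X_z : z ∈ σ]], for z ∈ σ and α ∈ k let E(z,α) = Σ_{n≥0} αⁿ X_z^n/n! = e^{α X_z}. Then the family (E(z,α)) indexed by pairs (z,α) ∈ σ × (k ∖ {0}) is linearly independent over the polynomial subring k[X_z : z ∈ σ]: any finite relation Σ P_{z,α} · E(z,α) = 0 with polynomial coefficients P_{z,α} ∈ k[X_z : z ∈ σ] forces all P_{z,α} = 0. -/
/-!
Fix a variable `z` and a monomial `m`, and read off the coefficients of the monomials that agree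
with `m` away from `z`. This `slice` sends `P · e^{α X_z}` to `Q_α · e^{αX}` in `k⟦X⟧`, with
`Q_α` a polynomial, and sends `P · e^{α X_w}`, `w ≠ z`, to a polynomial, because `e^{α X_w}` does
not involve `X_z`. A relation therefore becomes `∑ Q_α e^{αX} = R` with all `α ≠ 0`, and it
suffices that the `e^{αX}`, `α ∈ k`, are linearly independent over `k[X]`. The operator
`d/dX - β` maps `Q e^{αX}` to `(Q' + (α - β) Q) e^{αX}`; a high power of it kills the `β`-term
and is injective on the others, which gives independence by induction on the number of exponents.
-/

open scoped Classical

/-- The exponential `e^{α X_z}` in `k[[X_z : z ∈ σ]]`: its coefficient at `X_z^n` is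
`αⁿ/n!` and its coefficient at any monomial involving another variable is `0`. -/
noncomputable def expScaledVar {σ : Type*} (k : Type*) [Field k] (z : σ) (α : k) :
    MvPowerSeries σ k :=
  fun m => if m = Finsupp.single z (m z) then α ^ (m z) / (Nat.factorial (m z) : k) else 0

open Polynomial
open scoped PowerSeries

namespace Polynomial

variable {R : Type*} [CommRing R] [NoZeroDivisors R]

theorem injective_derivative_add_smul_one {c : R} (hc : c ≠ 0) :
    Function.Injective ⇑(derivative + c • 1 : Module.End R R[X]) := by
  rw [injective_iff_map_eq_zero]
  intro Q hQ
  by_contra hQ0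
  have hlead := congrArg (coeff · Q.natDegree) hQ
  simp only [LinearMap.add_apply, LinearMap.smul_apply, Module.End.one_apply, coeff_add,
    coeff_derivative, coeff_smul, smul_eq_mul, coeff_zero,
    coeff_eq_zero_of_natDegree_lt (Nat.lt_succ_self _), zero_mul, zero_add] at hlead
  exact mul_ne_zero hc (leadingCoeff_ne_zero.mpr hQ0) hlead

end Polynomial

namespace PowerSeries

theorem smul_eq_coe_mul {R : Type*} [CommSemiring R] (Q : R[X]) (f : R⟦X⟧) :
    Q • f = (Q : R⟦X⟧) * f :=
  rfl

theorem exists_coe_eq_of_coeff_eq_zero {R : Type*} [Semiring R] {f : R⟦X⟧} {N : ℕ}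
    (h : ∀ n, N < n → coeff n f = 0) : ∃ Q : R[X], (Q : R⟦X⟧) = f := by
  refine ⟨trunc (N + 1) f, ?_⟩
  ext n
  rw [Polynomial.coeff_coe, coeff_trunc]
  split_ifs with hn
  · rfl
  · exact (h n (by omega)).symm

theorem derivative_rescale {R : Type*} [CommSemiring R] (a : R) (f : R⟦X⟧) :
    d⁄dX R (rescale a f) = a • rescale a (d⁄dX R f) := by
  ext n
  simp only [coeff_derivative, coeff_rescale, coeff_smul, smul_eq_mul, pow_succ]
  ring

variable {A : Type*} [CommRing A] [Algebra ℚ A]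

theorem derivative_rescale_exp (a : A) :
    d⁄dX A (rescale a (exp A)) = a • rescale a (exp A) := by
  rw [derivative_rescale, derivative_exp]

noncomputable def shiftedDerivative (β : A) : Module.End A A⟦X⟧ :=
  (d⁄dX A : A⟦X⟧ →ₗ[A] A⟦X⟧) - β • 1

theorem shiftedDerivative_coe_mul_rescale_exp (β α : A) (Q : A[X]) :
    shiftedDerivative β ((Q : A⟦X⟧) * rescale α (exp A)) =
      ((Polynomial.derivative + (α - β) • 1 : Module.End A A[X]) Q : A⟦X⟧) *
        rescale α (exp A) := by
  simp only [shiftedDerivative, LinearMap.sub_apply, Derivation.coeFn_coe, Derivation.leibniz,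
    derivative_rescale_exp, derivative_coe, LinearMap.add_apply, Module.algebraMap_end_apply,
    Algebra.smul_def, Algebra.algebraMap_self, RingHom.id_apply, algebraMap_eq,
    Polynomial.algebraMap_eq, map_sub, mul_one,
    Polynomial.coe_add, Polynomial.coe_sub, Polynomial.coe_mul, Polynomial.coe_C]
  ring

theorem shiftedDerivative_pow_coe_mul_rescale_exp (β α : A) (Q : A[X]) (n : ℕ) :
    (shiftedDerivative β ^ n) ((Q : A⟦X⟧) * rescale α (exp A)) =
      ((Polynomial.derivative + (α - β) • 1 : Module.End A A[X]) ^ n) Q *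
        rescale α (exp A) := by
  induction n with
  | zero => rfl
  | succ n ih =>
    rw [pow_succ', Module.End.mul_apply, ih, shiftedDerivative_coe_mul_rescale_exp,
      pow_succ', Module.End.mul_apply]

variable [IsDomain A]

theorem linearIndependent_rescale_exp :
    LinearIndependent A[X] (fun α : A => rescale α (exp A)) := by
  rw [linearIndependent_iff']
  intro T
  induction T using Finset.induction_on with
  | empty => simp
  | insert β T hβ ih =>
    intro Q hQ
    set L := shiftedDerivative β ^ ((Q β).natDegree + 1)
    set M : A → Module.End A A[X] := fun α =>
      (Polynomial.derivative + (α - β) • 1) ^ ((Q β).natDegree + 1)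
    have hkill : L (Q β • rescale β (exp A)) = 0 := by
      rw [smul_eq_coe_mul, shiftedDerivative_pow_coe_mul_rescale_exp, sub_self, zero_smul,
        add_zero, Module.End.pow_apply, iterate_derivative_eq_zero (Nat.lt_succ_self _),
        Polynomial.coe_zero, zero_mul]
    have hT : ∀ α ∈ T, M α (Q α) = 0 := by
      refine ih (fun α => M α (Q α)) ?_
      have hLQ := congrArg L hQ
      rw [map_sum, Finset.sum_insert hβ, hkill, zero_add, map_zero] at hLQ
      simpa only [L, M, smul_eq_coe_mul, shiftedDerivative_pow_coe_mul_rescale_exp] using hLQ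
    have hQT : ∀ α ∈ T, Q α = 0 := by
      intro α hα
      have hne : α - β ≠ 0 := sub_ne_zero.mpr (ne_of_mem_of_not_mem hα hβ)
      have hinj : Function.Injective (M α) := by
        rw [Module.End.coe_pow]
        exact (Polynomial.injective_derivative_add_smul_one hne).iterate _
      exact (injective_iff_map_eq_zero (M α)).mp hinj _ (hT α hα)
    have hQβ : Q β = 0 := by
      rw [Finset.sum_insert hβ, Finset.sum_eq_zero (fun α hα => by rw [hQT α hα, zero_smul]),
        add_zero, smul_eq_coe_mul] at hQ
      exact Polynomial.coe_eq_zero_iff.mp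
        (((isUnit_exp A).map (rescale β)).mul_left_eq_zero.mp hQ)
    intro α hα
    rcases Finset.mem_insert.mp hα with rfl | hα
    · exact hQβ
    · exact hQT α hα

theorem eq_zero_of_sum_coe_mul_rescale_exp_eq_coe {T : Finset A} (hT : 0 ∉ T) {Q : A → A[X]}
    {R : A[X]} (h : ∑ α ∈ T, (Q α : A⟦X⟧) * rescale α (exp A) = R) : ∀ α ∈ T, Q α = 0 := by
  intro α hα
  have hne : ∀ β ∈ T, β ≠ 0 := fun β hβ => ne_of_mem_of_not_mem hβ hT
  have := linearIndependent_iff'.mp (linearIndependent_rescale_exp (A := A)) (insert 0 T)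
    (Function.update Q 0 (-R)) ?_ α (Finset.mem_insert_of_mem hα)
  · rwa [Function.update_of_ne (hne α hα)] at this
  · rw [Finset.sum_insert hT, Function.update_self,
      Finset.sum_congr rfl fun β hβ => by rw [Function.update_of_ne (hne β hβ)]]
    simp only [smul_eq_coe_mul, ← h, rescale_zero, RingHom.comp_apply, constantCoeff_exp,
      map_one, mul_one, Polynomial.coe_neg, neg_add_cancel]

end PowerSeries

theorem MvPolynomial.coeff_eq_zero_of_totalDegree_lt_apply {σ R : Type*} [CommSemiring R]
    {P : MvPolynomial σ R} {m : σ →₀ ℕ} {z : σ} (h : P.totalDegree < m z) : P.coeff m = 0 :=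
  coeff_eq_zero_of_totalDegree_lt (h.trans_le (Finsupp.le_degree z m))

namespace MvPowerSeries

open Finsupp

section Slice

variable {σ R : Type*} [CommSemiring R]

noncomputable def slice (z : σ) (m : σ →₀ ℕ) : MvPowerSeries σ R →ₗ[R] R⟦X⟧ where
  toFun φ := PowerSeries.mk fun n => coeff (m.update z n) φ
  map_add' φ ψ := by ext; simp
  map_smul' c φ := by ext; simp

@[simp]
theorem coeff_slice (z : σ) (m : σ →₀ ℕ) (φ : MvPowerSeries σ R) (n : ℕ) :
    PowerSeries.coeff n (slice z m φ) = coeff (m.update z n) φ := by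
  simp [slice]

theorem exists_coe_eq_slice_of_coeff_eq_zero {z : σ} {m : σ →₀ ℕ} {φ : MvPowerSeries σ R}
    {N : ℕ} (h : ∀ m' : σ →₀ ℕ, N < m' z → coeff m' φ = 0) :
    ∃ Q : R[X], (Q : R⟦X⟧) = slice z m φ :=
  PowerSeries.exists_coe_eq_of_coeff_eq_zero fun n hn => by
    rw [coeff_slice]
    exact h _ (by simpa using hn)

theorem exists_coe_eq_slice_coe (z : σ) (m : σ →₀ ℕ) (P : MvPolynomial σ R) :
    ∃ Q : R[X], (Q : R⟦X⟧) = slice z m (P : MvPowerSeries σ R) :=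
  exists_coe_eq_slice_of_coeff_eq_zero fun _ h => by
    rw [MvPolynomial.coeff_coe, MvPolynomial.coeff_eq_zero_of_totalDegree_lt_apply h]

end Slice

variable {σ k : Type*} [Field k]

theorem coeff_single_expScaledVar (z : σ) (α : k) (j : ℕ) :
    coeff (single z j) (expScaledVar k z α) = α ^ j / j.factorial := by
  simp [expScaledVar, coeff_apply]

theorem coeff_expScaledVar_of_ne {z : σ} {m : σ →₀ ℕ} (h : m ≠ single z (m z)) (α : k) :
    coeff m (expScaledVar k z α) = 0 := by
  simp [expScaledVar, coeff_apply, h]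

theorem coeff_mul_expScaledVar (φ : MvPowerSeries σ k) (z : σ) (α : k) (m : σ →₀ ℕ) :
    coeff m (φ * expScaledVar k z α) =
      ∑ j ∈ Finset.range (m z + 1), coeff (m - single z j) φ * (α ^ j / j.factorial) := by
  rw [coeff_mul]
  symm
  refine Finset.sum_of_injOn (fun j => (m - single z j, single z j)) ?_ ?_ ?_ ?_
  · intro i _ j _ hij
    exact single_injective z (congrArg Prod.snd hij)
  · intro j hj
    simp only [Finset.coe_range, Set.mem_Iio] at hj
    simp [tsub_add_cancel_of_le (single_le_iff.mpr (Nat.lt_succ_iff.mp hj))]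
  · rintro ⟨a, b⟩ hab hne
    rw [Finset.HasAntidiagonal.mem_antidiagonal] at hab
    by_cases hb : b = single z (b z)
    · refine absurd ⟨b z, ?_, ?_⟩ hne
      · simp [← hab]
      · simp [← hab, ← hb]
    · rw [coeff_expScaledVar_of_ne hb, mul_zero]
  · intro j _
    rw [coeff_single_expScaledVar]

theorem coeff_coe_mul_expScaledVar_eq_zero {z w : σ} (hz : z ≠ w) (α : k)
    {P : MvPolynomial σ k} {m : σ →₀ ℕ} (h : P.totalDegree < m w) :
    coeff m ((P : MvPowerSeries σ k) * expScaledVar k z α) = 0 := by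
  rw [coeff_mul_expScaledVar]
  refine Finset.sum_eq_zero fun j _ => ?_
  rw [MvPolynomial.coeff_coe, MvPolynomial.coeff_eq_zero_of_totalDegree_lt_apply (z := w),
    zero_mul]
  simpa [single_apply, hz] using h

theorem exists_coe_eq_slice_coe_mul_expScaledVar {z w : σ} (hz : z ≠ w) (α : k)
    (m : σ →₀ ℕ) (P : MvPolynomial σ k) :
    ∃ R : k[X], (R : k⟦X⟧) = slice w m ((P : MvPowerSeries σ k) * expScaledVar k z α) :=
  exists_coe_eq_slice_of_coeff_eq_zero fun _ => coeff_coe_mul_expScaledVar_eq_zero hz α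

variable [CharZero k]

theorem slice_mul_expScaledVar_self (φ : MvPowerSeries σ k) (z : σ) (α : k) (m : σ →₀ ℕ) :
    slice z m (φ * expScaledVar k z α) =
      slice z m φ * PowerSeries.rescale α (PowerSeries.exp k) := by
  ext n
  rw [coeff_slice, coeff_mul_expScaledVar, mul_comm, PowerSeries.coeff_mul,
    Finset.Nat.sum_antidiagonal_eq_sum_range_succ
      (fun i j => PowerSeries.coeff i (PowerSeries.rescale α (PowerSeries.exp k)) *
        PowerSeries.coeff j (slice z m φ))]
  have hupd : ∀ j, m.update z n - single z j = m.update z (n - j) := by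
    intro j
    ext w
    rcases eq_or_ne w z with rfl | hw <;> simp [update_apply, *]
  simp only [update_apply, ↓reduceIte, hupd, coeff_slice, PowerSeries.coeff_rescale,
    PowerSeries.coeff_exp, one_div, map_inv₀, map_natCast]
  exact Finset.sum_congr rfl fun j _ => by ring

end MvPowerSeries

/-- Let `σ` be any alphabet of commuting variables and `k` a field of
characteristic zero. In `k[[X_z : z ∈ σ]]`, the family `(e^{α X_z})` indexed by pairs
`(z, α) ∈ σ × (k ∖ {0})` is linearly independent over the polynomial subring
`k[X_z : z ∈ σ]`. -/
theorem exponentials_linearly_independent_over_polynomials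
    (σ : Type*) (k : Type*) [Field k] [CharZero k] :
    ∀ (s : Finset (σ × k)) (P : σ × k → MvPolynomial σ k),
      (∀ p ∈ s, p.2 ≠ 0) →
      (∑ p ∈ s, (↑(P p) : MvPowerSeries σ k) * expScaledVar k p.1 p.2 = 0) →
      ∀ p ∈ s, P p = 0 := by
  rintro s P hs hrel ⟨z, β⟩ hβ
  ext m
  choose Q hQ using fun α => MvPowerSeries.exists_coe_eq_slice_coe z m (P (z, α))
  obtain ⟨R, hR⟩ : ∃ R : k[X], (R : k⟦X⟧) = ∑ q ∈ s with q.1 ≠ z,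
      MvPowerSeries.slice z m ((P q : MvPowerSeries σ k) * expScaledVar k q.1 q.2) := by
    refine (RingHom.mem_rangeS (f := Polynomial.coeToPowerSeries.ringHom)).mp
      (sum_mem fun q hq => ?_)
    exact MvPowerSeries.exists_coe_eq_slice_coe_mul_expScaledVar (Finset.mem_filter.mp hq).2 _ m _
  set T := (s.filter (·.1 = z)).image Prod.snd
  have hsum :
      ∑ α ∈ T, (Q α : k⟦X⟧) * PowerSeries.rescale α (PowerSeries.exp k) = ↑(-R) := by
    have hslice := congrArg (MvPowerSeries.slice z m) hrel
    rw [map_sum, map_zero, ← Finset.sum_filter_add_sum_filter_not s (·.1 = z), ← hR] at hslice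
    rw [Finset.sum_image, Polynomial.coe_neg, eq_neg_iff_add_eq_zero, ← hslice]
    · congr 1
      refine Finset.sum_congr rfl fun ⟨z', α⟩ hq => ?_
      obtain ⟨-, rfl⟩ := Finset.mem_filter.mp hq
      rw [MvPowerSeries.slice_mul_expScaledVar_self, hQ]
    · rintro ⟨z₁, α₁⟩ h₁ ⟨z₂, α₂⟩ h₂ (rfl : α₁ = α₂)
      simp_all
  have hQβ := PowerSeries.eq_zero_of_sum_coe_mul_rescale_exp_eq_coe ?_ hsum β ?_
  · simpa [hQβ] using (congrArg (PowerSeries.coeff (m z)) (hQ β)).symm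
  · intro h0
    obtain ⟨q, hq, hq0⟩ := Finset.mem_image.mp h0
    exact hs q (Finset.mem_filter.mp hq).1 hq0
  · exact Finset.mem_image.mpr ⟨(z, β), Finset.mem_filter.mpr ⟨hβ, rfl⟩, rfl⟩
end

section
/- In the formal power series ring ℂ[[X]], the family of exponentials (e^{αX})_{α∈ℂ}, where e^{αX} = Σ_{n≥0} αⁿXⁿ/n! is the rescaling of the exponential series by α, is linearly independent over the polynomial subring ℂ[X]: any finite relation Σ_α P_α(X)·e^{αX} = 0 with P_α ∈ ℂ[X] forces all P_α = 0. -/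
/-!
Induct on the finite set of exponents. To eliminate `a`, apply `(d/dX - a)^k` with
`k > deg P_a`: since `(d/dX - a)(Q e^{αX}) = (Q' + (α - a) Q) e^{αX}`, this kills the `a`-term and
transforms every other coefficient `P_β` by an iterate of `Q ↦ Q' + (β - a) Q`, which is injective
on polynomials because `β ≠ a`. The induction hypothesis then forces `P_β = 0` for `β ≠ a`, and
finally `P_a e^{aX} = 0` gives `P_a = 0`.
-/

/-- The exponential `e^{αX} = Σ αⁿXⁿ/n!` in `ℂ[[X]]`. -/
noncomputable def expScaled (α : ℂ) : PowerSeries ℂ :=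
  PowerSeries.mk fun n => α ^ n / (Nat.factorial n : ℂ)

open Polynomial
open scoped PowerSeries

namespace Polynomial

variable {R : Type*} [CommRing R]

noncomputable def twistedDerivative (c : R) : Module.End R R[X] :=
  derivative + c • LinearMap.id

@[simp]
lemma twistedDerivative_apply (c : R) (Q : R[X]) :
    twistedDerivative c Q = derivative Q + C c * Q := by
  simp [twistedDerivative, C_mul']

lemma twistedDerivative_zero : twistedDerivative (0 : R) = derivative := by
  simp [twistedDerivative]

lemma twistedDerivative_injective [NoZeroDivisors R] {c : R} (hc : c ≠ 0) :
    Function.Injective (twistedDerivative c) := by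
  refine (injective_iff_map_eq_zero _).2 fun Q hQ => ?_
  by_contra hQ0
  -- the derivative does not reach degree `natDegree Q`, so `c` kills the leading coefficient
  have htop := congrArg (coeff · Q.natDegree) hQ
  simp only [twistedDerivative_apply, coeff_add, coeff_derivative, coeff_C_mul, coeff_zero,
    coeff_natDegree_succ_eq_zero, zero_mul, zero_add] at htop
  exact mul_ne_zero hc (leadingCoeff_ne_zero.2 hQ0) htop

end Polynomial

lemma expScaled_ne_zero (α : ℂ) : expScaled α ≠ 0 := fun h => by
  simpa [expScaled] using congrArg (PowerSeries.coeff 0) h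

lemma derivative_expScaled (α : ℂ) : d⁄dX ℂ (expScaled α) = PowerSeries.C α * expScaled α := by
  ext n
  have hn : (n : ℂ) + 1 ≠ 0 := by exact_mod_cast n.succ_ne_zero
  simp only [expScaled, PowerSeries.coeff_derivative, PowerSeries.coeff_mk,
    PowerSeries.coeff_C_mul, Nat.factorial_succ, Nat.cast_mul, Nat.cast_succ, pow_succ]
  field_simp

noncomputable def derivativeSubSMul (α₀ : ℂ) : Module.End ℂ ℂ⟦X⟧ :=
  (d⁄dX ℂ : ℂ⟦X⟧ →ₗ[ℂ] ℂ⟦X⟧) - α₀ • LinearMap.id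

lemma derivativeSubSMul_coe_mul_expScaled (α₀ α : ℂ) (Q : ℂ[X]) :
    derivativeSubSMul α₀ (Q * expScaled α) = twistedDerivative (α - α₀) Q * expScaled α := by
  rw [derivativeSubSMul, LinearMap.sub_apply, LinearMap.smul_apply, LinearMap.id_apply,
    Derivation.coeFn_coe, Derivation.leibniz, derivative_expScaled, PowerSeries.derivative_coe,
    twistedDerivative_apply]
  simp only [coe_add, coe_mul, coe_sub, coe_C, smul_eq_mul, PowerSeries.smul_eq_C_mul, map_sub]
  ring

lemma pow_derivativeSubSMul_coe_mul_expScaled (α₀ α : ℂ) (k : ℕ) (Q : ℂ[X]) :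
    (derivativeSubSMul α₀ ^ k) (Q * expScaled α) =
      (twistedDerivative (α - α₀) ^ k) Q * expScaled α := by
  induction k with
  | zero => rfl
  | succ k ih =>
    rw [pow_succ', pow_succ', Module.End.mul_apply, Module.End.mul_apply, ih,
      derivativeSubSMul_coe_mul_expScaled]

/-- In `ℂ[[X]]`, the family of exponentials `(e^{αX})_{α∈ℂ}` is linearly
independent over the polynomial subring `ℂ[X]`: any finite relation
`Σ_α P_α(X)·e^{αX} = 0` with `P_α ∈ ℂ[X]` forces all `P_α = 0`. -/
theorem exponentials_linearly_independent_over_polynomial_ring :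
    ∀ (s : Finset ℂ) (P : ℂ → Polynomial ℂ),
      (∑ α ∈ s, (↑(P α) : PowerSeries ℂ) * expScaled α = 0) →
      ∀ α ∈ s, P α = 0 := by
  intro s
  induction s using Finset.cons_induction with
  | empty => simp
  | cons a s ha ih =>
    intro P h
    obtain ⟨k, hk⟩ : ∃ k, (P a).natDegree < k := ⟨_, Nat.lt_succ_self _⟩
    have hs : ∑ β ∈ s, ((twistedDerivative (β - a))^[k] (P β) : ℂ⟦X⟧) * expScaled β = 0 := by
      have := congrArg (derivativeSubSMul a ^ k) h
      simpa only [map_zero, Finset.sum_cons, map_add, map_sum,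
        pow_derivativeSubSMul_coe_mul_expScaled, sub_self, twistedDerivative_zero,
        Module.End.coe_pow, iterate_derivative_eq_zero hk, coe_zero, zero_mul,
        zero_add] using this
    have hPs : ∀ β ∈ s, P β = 0 := fun β hβ =>
      have hβa : β - a ≠ 0 := sub_ne_zero.2 (ne_of_mem_of_not_mem hβ ha)
      ((twistedDerivative_injective hβa).iterate k).eq_iff.1 <| by
        rw [ih _ hs β hβ, iterate_map_zero]
    have hPa : P a = 0 := by
      rw [Finset.sum_cons, Finset.sum_eq_zero fun β hβ => by rw [hPs β hβ, coe_zero, zero_mul],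
        add_zero] at h
      exact coe_eq_zero_iff.1 ((mul_eq_zero.1 h).resolve_right (expScaled_ne_zero a))
    simpa [hPa] using hPs
end

section
/- In the formal power series ring ℂ[[X]], the family (X^k · e^{αX}) indexed by pairs (k, α) ∈ ℕ × ℂ, where e^{αX} = Σ_{n≥0} αⁿXⁿ/n!, is linearly independent over ℂ. -/
/-!
Every `X ^ k * e^{αX}` lies in the generalized eigenspace of the formal derivative `d/dX` for the
eigenvalue `α`, because `(d/dX - α)` sends `X ^ (k + 1) * e^{αX}` to `(k + 1) • X ^ k * e^{αX}`.
Generalized eigenspaces for distinct eigenvalues are independent, so it suffices to treat one `α`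
at a time, and there multiplication by the unit `e^{αX}` carries the independent monomials `X ^ k`
to the family in question.
-/

theorem LinearIndependent.sigma_of_iSupIndep {R M η : Type*} {ιs : η → Type*} [Ring R]
    [AddCommGroup M] [Module R M] {p : η → Submodule R M} (hp : iSupIndep p)
    {f : ∀ j, ιs j → M} (hf : ∀ j, LinearIndependent R (f j)) (hmem : ∀ j k, f j k ∈ p j) :
    LinearIndependent R fun jk : Σ j, ιs j => f jk.1 jk.2 := by
  have hspan : ∀ j, Submodule.span R (Set.range (f j)) ≤ p j := fun j =>
    Submodule.span_le.2 (Set.range_subset_iff.2 (hmem j))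
  refine linearIndependent_iUnion_finite hf fun i t _ hit => (hp i).mono (hspan i) ?_
  refine iSup₂_le fun j hj => (hspan j).trans ?_
  exact le_iSup₂ (f := fun j (_ : j ≠ i) => p j) j (by rintro rfl; exact hit hj)

namespace PowerSeries

section CommRing

variable {R : Type*} [CommRing R]

theorem linearIndependent_X_pow : LinearIndependent R fun k : ℕ => (X : R⟦X⟧) ^ k := by
  rw [linearIndependent_iff']
  intro s g hg i hi
  have := congrArg (coeff i) hg
  simp only [map_sum, map_smul, coeff_X_pow, smul_eq_mul, mul_ite, mul_one, mul_zero,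
    map_zero] at this
  simpa [hi] using this

theorem linearIndependent_X_pow_mul_of_isUnit {u : R⟦X⟧} (hu : IsUnit u) :
    LinearIndependent R fun k : ℕ => (X : R⟦X⟧) ^ k * u := by
  have hker : LinearMap.ker (LinearMap.mulRight R u) = ⊥ :=
    LinearMap.ker_eq_bot.2 fun _ _ h => hu.mul_right_cancel h
  simpa only [Function.comp_def, LinearMap.mulRight_apply] using
    (linearIndependent_X_pow (R := R)).map' _ hker

theorem derivative_sub_smul_X_pow_succ_mul {f : R⟦X⟧} {α : R} (hf : d⁄dX R f = α • f) (k : ℕ) :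
    ((d⁄dX R).toLinearMap - α • 1) (X ^ (k + 1) * f) = ((k + 1 : ℕ) : R) • (X ^ k * f) := by
  have hleibniz : d⁄dX R (X ^ (k + 1) * f) = X ^ (k + 1) * (α • f) + f * ((k + 1) • X ^ k) := by
    rw [Derivation.leibniz, hf, Derivation.leibniz_pow, derivative_X, Nat.add_sub_cancel]
    simp
  rw [LinearMap.sub_apply, LinearMap.smul_apply, Module.End.one_apply,
    Derivation.coeFn_coe, hleibniz]
  simp only [nsmul_eq_mul, smul_eq_C_mul, map_natCast]
  push_cast
  ring

theorem X_pow_mul_mem_genEigenspace_derivative {f : R⟦X⟧} {α : R} (hf : d⁄dX R f = α • f)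
    (k : ℕ) : X ^ k * f ∈ Module.End.genEigenspace (d⁄dX R).toLinearMap α ↑(k + 1) := by
  rw [Module.End.mem_genEigenspace_nat, LinearMap.mem_ker]
  induction k with
  | zero => simpa [sub_eq_zero] using hf
  | succ k ih =>
    rw [pow_succ, Module.End.mul_apply, derivative_sub_smul_X_pow_succ_mul hf, map_smul, ih,
      smul_zero]

end CommRing

section Field

variable {K : Type*} [Field K]

noncomputable def scaledExp (α : K) : K⟦X⟧ :=
  mk fun n => α ^ n / (n.factorial : K)

theorem isUnit_scaledExp (α : K) : IsUnit (scaledExp α) := by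
  simp [isUnit_iff_constantCoeff, ← coeff_zero_eq_constantCoeff_apply, scaledExp]

theorem derivative_scaledExp [CharZero K] (α : K) : d⁄dX K (scaledExp α) = α • scaledExp α := by
  ext n
  simp only [coeff_derivative, scaledExp, coeff_mk, map_smul, smul_eq_mul, Nat.factorial_succ]
  push_cast
  field_simp
  ring

theorem linearIndependent_X_pow_mul_scaledExp [CharZero K] :
    LinearIndependent K fun p : ℕ × K => X ^ p.1 * scaledExp p.2 := by
  have hsigma : LinearIndependent K fun p : Σ _ : K, ℕ => X ^ p.2 * scaledExp p.1 :=
    .sigma_of_iSupIndep (Module.End.independent_genEigenspace (d⁄dX K).toLinearMap ⊤)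
      (fun α => linearIndependent_X_pow_mul_of_isUnit (isUnit_scaledExp α))
      fun α k => (Module.End.genEigenspace _ α).monotone le_top
        (X_pow_mul_mem_genEigenspace_derivative (derivative_scaledExp α) k)
  exact (linearIndependent_equiv' ((Equiv.prodComm ℕ K).trans (Equiv.sigmaEquivProd K ℕ).symm)
    rfl).2 hsigma

end Field

end PowerSeries

/-- In `ℂ[[X]]`, the family `(X^k · e^{αX})` indexed by pairs
`(k, α) ∈ ℕ × ℂ`, where `e^{αX} = Σ αⁿXⁿ/n!`, is linearly independent over `ℂ`. -/
theorem monomials_times_exponentials_linearly_independent :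
    LinearIndependent ℂ
      (fun p : ℕ × ℂ =>
        (PowerSeries.X ^ p.1 *
          PowerSeries.mk (fun n => p.2 ^ n / (Nat.factorial n : ℂ)) : PowerSeries ℂ)) :=
  PowerSeries.linearIndependent_X_pow_mul_scaledExp
end

section
/- Every rational formal power series over ℂ lies in the ℂ-linear span of the monomials and of the powers of geometric series: if S ∈ ℂ[[X]] and there exist polynomials p, q ∈ ℂ[X] with q(0) ≠ 0 and q·S = p in ℂ[[X]], then S belongs to the ℂ-linear span of the set {X^k : k ∈ ℕ} ∪ {((1 − αX)^{-1})^l : α ∈ ℂ ∖ {0}, l ≥ 1}, where (1 − αX)^{-1} is the multiplicative inverse of 1 − αX in ℂ[[X]]. -/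
/-!
Partial fractions. Over an algebraically closed field the denominator `q` factors into linear
factors `X - a` with `a ≠ 0`, and `X - a = -a (1 - a⁻¹X)`, so it suffices that the span of the
monomials and of the powers of geometric series is stable under multiplication by each
`(1 - αX)⁻¹`. On the generators this follows from `(1 - αX)⁻¹ X = α⁻¹((1 - αX)⁻¹ - 1)` and, for
`α ≠ γ`, from the partial fraction decomposition
`(1 - αX)⁻¹ (1 - γX)⁻¹ = (α - γ)⁻¹ (α (1 - αX)⁻¹ - γ (1 - γX)⁻¹)`.
-/

namespace PowerSeries

variable {k : Type*} [Field k]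

variable (k) in
def geomSpan : Submodule k k⟦X⟧ :=
  Submodule.span k
    ((Set.range fun n : ℕ => (X : k⟦X⟧) ^ n) ∪
      {f : k⟦X⟧ | ∃ α : k, α ≠ 0 ∧ ∃ l : ℕ, 1 ≤ l ∧ f = ((1 - C α * X)⁻¹) ^ l})

lemma one_sub_C_mul_X_mul_inv (α : k) : (1 - C α * X : k⟦X⟧) * (1 - C α * X)⁻¹ = 1 :=
  PowerSeries.mul_inv_cancel _ (by simp)

lemma inv_one_sub_C_mul_X_mul_X {α : k} (hα : α ≠ 0) :
    (1 - C α * X : k⟦X⟧)⁻¹ * X = α⁻¹ • ((1 - C α * X)⁻¹ - 1) := by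
  have hC : C α⁻¹ * C α = (1 : k⟦X⟧) := by rw [← map_mul, inv_mul_cancel₀ hα, map_one]
  rw [smul_eq_C_mul]
  linear_combination (-((1 - C α * X)⁻¹ * X)) * hC - C α⁻¹ * one_sub_C_mul_X_mul_inv α

lemma inv_one_sub_C_mul_X_mul_inv_one_sub_C_mul_X {α γ : k} (h : α ≠ γ) :
    (1 - C α * X : k⟦X⟧)⁻¹ * (1 - C γ * X)⁻¹ =
      (α - γ)⁻¹ • (α • (1 - C α * X)⁻¹ - γ • (1 - C γ * X)⁻¹) := by
  have hC : C (α - γ)⁻¹ * (C α - C γ) = (1 : k⟦X⟧) := by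
    rw [← map_sub, ← map_mul, inv_mul_cancel₀ (sub_ne_zero.mpr h), map_one]
  simp only [smul_eq_C_mul]
  linear_combination (-((1 - C α * X)⁻¹ * (1 - C γ * X)⁻¹)) * hC
    + C (α - γ)⁻¹ * C α * (1 - C α * X)⁻¹ * one_sub_C_mul_X_mul_inv γ
    - C (α - γ)⁻¹ * C γ * (1 - C γ * X)⁻¹ * one_sub_C_mul_X_mul_inv α

lemma X_pow_mem_geomSpan (n : ℕ) : (X : k⟦X⟧) ^ n ∈ geomSpan k :=
  Submodule.subset_span (Or.inl ⟨n, rfl⟩)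

lemma inv_one_sub_C_mul_X_pow_mem_geomSpan {α : k} (hα : α ≠ 0) {l : ℕ} (hl : 1 ≤ l) :
    ((1 - C α * X : k⟦X⟧)⁻¹) ^ l ∈ geomSpan k :=
  Submodule.subset_span (Or.inr ⟨α, hα, l, hl, rfl⟩)

lemma inv_one_sub_C_mul_X_mem_geomSpan {α : k} (hα : α ≠ 0) :
    (1 - C α * X : k⟦X⟧)⁻¹ ∈ geomSpan k := by
  simpa using inv_one_sub_C_mul_X_pow_mem_geomSpan hα le_rfl

lemma coe_mem_geomSpan (p : Polynomial k) : (p : k⟦X⟧) ∈ geomSpan k := by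
  induction p using Polynomial.induction_on' with
  | add p q hp hq => rw [Polynomial.coe_add]; exact add_mem hp hq
  | monomial n a =>
    rw [Polynomial.coe_monomial, monomial_eq_C_mul_X_pow, ← smul_eq_C_mul]
    exact Submodule.smul_mem _ a (X_pow_mem_geomSpan n)

lemma inv_one_sub_C_mul_X_mul_X_pow_mem_geomSpan {α : k} (hα : α ≠ 0) (n : ℕ) :
    (1 - C α * X : k⟦X⟧)⁻¹ * X ^ n ∈ geomSpan k := by
  induction n with
  | zero => simpa using inv_one_sub_C_mul_X_mem_geomSpan hα
  | succ n ih =>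
    rw [pow_succ', ← mul_assoc, inv_one_sub_C_mul_X_mul_X hα, smul_mul_assoc, sub_mul, one_mul]
    exact Submodule.smul_mem _ _ (sub_mem ih (X_pow_mem_geomSpan n))

lemma inv_one_sub_C_mul_X_mul_inv_pow_mem_geomSpan {α γ : k} (hα : α ≠ 0) (hγ : γ ≠ 0)
    (l : ℕ) : (1 - C α * X : k⟦X⟧)⁻¹ * ((1 - C γ * X)⁻¹) ^ l ∈ geomSpan k := by
  obtain rfl | hαγ := eq_or_ne α γ
  · rw [← pow_succ']
    exact inv_one_sub_C_mul_X_pow_mem_geomSpan hα l.succ_pos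
  induction l with
  | zero => simpa using inv_one_sub_C_mul_X_mem_geomSpan hα
  | succ l ih =>
    rw [pow_succ', ← mul_assoc, inv_one_sub_C_mul_X_mul_inv_one_sub_C_mul_X hαγ, smul_mul_assoc,
      sub_mul, smul_mul_assoc, smul_mul_assoc, ← pow_succ']
    exact Submodule.smul_mem _ _ (sub_mem (Submodule.smul_mem _ _ ih)
      (Submodule.smul_mem _ _ (inv_one_sub_C_mul_X_pow_mem_geomSpan hγ l.succ_pos)))

lemma inv_one_sub_C_mul_X_mul_mem_geomSpan {α : k} (hα : α ≠ 0) {f : k⟦X⟧}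
    (hf : f ∈ geomSpan k) : (1 - C α * X)⁻¹ * f ∈ geomSpan k := by
  induction hf using Submodule.span_induction with
  | mem f hf =>
    obtain ⟨n, rfl⟩ | ⟨γ, hγ, l, -, rfl⟩ := hf
    · exact inv_one_sub_C_mul_X_mul_X_pow_mem_geomSpan hα n
    · exact inv_one_sub_C_mul_X_mul_inv_pow_mem_geomSpan hα hγ l
  | zero => simp
  | add f g _ _ hf hg => rw [mul_add]; exact add_mem hf hg
  | smul c f _ hf => rw [mul_smul_comm]; exact Submodule.smul_mem _ c hf

lemma mem_geomSpan_of_X_sub_C_mul_mem {a : k} (ha : a ≠ 0) {f : k⟦X⟧}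
    (hf : ((Polynomial.X - Polynomial.C a : Polynomial k) : k⟦X⟧) * f ∈ geomSpan k) :
    f ∈ geomSpan k := by
  have hC : C a * C a⁻¹ = (1 : k⟦X⟧) := by rw [← map_mul, mul_inv_cancel₀ ha, map_one]
  have hf_eq : f = (-a)⁻¹ • ((1 - C a⁻¹ * X)⁻¹ *
      (((Polynomial.X - Polynomial.C a : Polynomial k) : k⟦X⟧) * f)) := by
    rw [Polynomial.coe_sub, Polynomial.coe_X, Polynomial.coe_C, smul_eq_C_mul, inv_neg, map_neg]
    linear_combination
      (-((1 - C a⁻¹ * X) * (1 - C a⁻¹ * X)⁻¹ * f) - C a⁻¹ * (1 - C a⁻¹ * X)⁻¹ * X * f) * hC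
        - f * one_sub_C_mul_X_mul_inv a⁻¹
  rw [hf_eq]
  exact Submodule.smul_mem _ _ (inv_one_sub_C_mul_X_mul_mem_geomSpan (inv_ne_zero ha) hf)

lemma mem_geomSpan_of_prod_X_sub_C_mul_mem {s : Multiset k} (hs : ∀ a ∈ s, a ≠ 0) {f : k⟦X⟧}
    (hf : ((s.map fun a => (Polynomial.X - Polynomial.C a : Polynomial k)).prod : k⟦X⟧) * f ∈
      geomSpan k) :
    f ∈ geomSpan k := by
  induction s using Multiset.induction_on generalizing f with
  | empty => simpa using hf
  | cons a s ih =>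
    rw [Multiset.map_cons, Multiset.prod_cons, Polynomial.coe_mul, mul_assoc] at hf
    exact ih (fun b hb => hs b (Multiset.mem_cons_of_mem hb))
      (mem_geomSpan_of_X_sub_C_mul_mem (hs a (Multiset.mem_cons_self a s)) hf)

lemma mem_geomSpan_of_mul_mem {q : Polynomial k} (hq : q.Splits) (hq0 : q.eval 0 ≠ 0)
    {f : k⟦X⟧} (hf : (q : k⟦X⟧) * f ∈ geomSpan k) : f ∈ geomSpan k := by
  have hq_ne : q ≠ 0 := by rintro rfl; simp at hq0
  have hroots : ∀ a ∈ q.roots, a ≠ 0 := by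
    rintro a ha rfl
    exact hq0 ((Polynomial.mem_roots hq_ne).mp ha)
  rw [hq.eq_prod_roots, Polynomial.coe_mul, Polynomial.coe_C, mul_assoc, ← smul_eq_C_mul] at hf
  refine mem_geomSpan_of_prod_X_sub_C_mul_mem hroots ?_
  simpa [Polynomial.leadingCoeff_ne_zero.mpr hq_ne] using
    Submodule.smul_mem _ q.leadingCoeff⁻¹ hf

end PowerSeries

/-- Every rational formal power series over `ℂ` lies in the `ℂ`-linear
span of the monomials `X^k` and of the powers `((1 − αX)⁻¹)^l` (`α ≠ 0`, `l ≥ 1`) of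
geometric series. -/
theorem rational_power_series_mem_span_monomials_and_geometric_powers
    (S : PowerSeries ℂ) (p q : Polynomial ℂ)
    (hq0 : Polynomial.eval 0 q ≠ 0)
    (hqS : (↑q : PowerSeries ℂ) * S = ↑p) :
    S ∈ Submodule.span ℂ
      ((Set.range fun k : ℕ => (PowerSeries.X : PowerSeries ℂ) ^ k) ∪
       {f : PowerSeries ℂ | ∃ α : ℂ, α ≠ 0 ∧ ∃ l : ℕ, 1 ≤ l ∧
          f = ((1 - PowerSeries.C α * PowerSeries.X)⁻¹) ^ l}) :=
  PowerSeries.mem_geomSpan_of_mul_mem (IsAlgClosed.splits q) hq0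
    (hqS ▸ PowerSeries.coe_mem_geomSpan p)
end

section
/- For nonnegative integers s₁, …, s_r (r ≥ 1), define the polylogarithm at negative indices Li^-_{s₁,…,s_r}(z) = Σ_{n₁>…>n_r>0} n₁^{s₁}⋯n_r^{s_r} z^{n₁} for |z| < 1 (with Li^- of the empty index equal to the constant function 1), and let θ₀ be the operator (θ₀ f)(z) = z·f'(z) and λ(z) = z/(1−z). Then for every z with |z| < 1, Li^-_{s₁,s₂,…,s_r}(z) = θ₀^{s₁}( λ · Li^-_{s₂,…,s_r} )(z), i.e. Li^-_{s₁,…,s_r} is obtained by applying s₁ times the operator f ↦ z f'(z) to the function z ↦ (z/(1−z))·Li^-_{s₂,…,s_r}(z). -/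
/-!
Split a chain `n₁ > n₂ > ⋯ > n_{r+1} > 0` into its top entry `n₁` and the chain `n₂ > ⋯`;
summing the geometric series over `n₁ > n₂` gives `Li⁻_{0,s}(z) = z/(1-z) · Li⁻_s(z)`.
Raising `s₁` by one multiplies the term of a chain by `n₁`, which is what `θ₀` does to `z ^ n₁`.
Termwise differentiation is legitimate on `|z| < ρ < 1`, since the chains with top entry `n`
number at most `n ^ r`, so the terms are dominated by the summable `n ^ (r + Σ sᵢ) ρ ^ n`.
-/

/-- The polylogarithm at nonnegative integer multi-indices (polylogarithm "at negative
indices") `Li⁻_{s₁,…,s_r}(z) = Σ_{n₁>…>n_r>0} n₁^{s₁}⋯n_r^{s_r} z^{n₁}`; for `r = 0`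
(the empty index) it is the constant function `1`. -/
noncomputable def LiNeg (r : ℕ) (s : Fin r → ℕ) (z : ℂ) : ℂ :=
  ∑' n : {n : Fin r → ℕ // StrictAnti n ∧ ∀ i, 0 < n i},
    (∏ i, ((n.1 i : ℂ)) ^ (s i)) * (if h : 0 < r then z ^ (n.1 ⟨0, h⟩) else 1)

/-- The differential operator `θ₀ : f ↦ (z ↦ z·f'(z))`. -/
noncomputable def theta0 (f : ℂ → ℂ) : ℂ → ℂ := fun z => z * deriv f z

open Finset

theorem summable_comp_of_card_filter_le {ι : Type*} {f : ι → ℕ} {g : ℕ → ℝ} {N : ℕ → ℕ}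
    (hg : 0 ≤ g) (hN : ∀ (F : Finset ι) (b : ℕ), #{c ∈ F | f c = b} ≤ N b)
    (hs : Summable fun b => N b * g b) : Summable fun c => g (f c) := by
  classical
  refine summable_of_sum_le (c := ∑' b, N b * g b) (fun c => hg _) fun F => ?_
  rw [Finset.sum_comp g f]
  calc ∑ b ∈ F.image f, #{c ∈ F | f c = b} • g b
      ≤ ∑ b ∈ F.image f, N b * g b := by
        gcongr with b
        rw [nsmul_eq_mul]
        exact mul_le_mul_of_nonneg_right (mod_cast hN F b) (hg b)
    _ ≤ ∑' b, N b * g b := hs.sum_le_tsum _ fun b _ => mul_nonneg (Nat.cast_nonneg _) (hg b)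

theorem eqOn_theta0 {f g : ℂ → ℂ} {U : Set ℂ} (h : Set.EqOn f g U) (hU : IsOpen U) :
    Set.EqOn (theta0 f) (theta0 g) U := fun z hz => by
  simp only [theta0, (h.eventuallyEq_of_mem (hU.mem_nhds hz)).deriv_eq]

theorem theta0_const_mul_pow (a z : ℂ) (n : ℕ) :
    theta0 (fun w => a * w ^ n) z = n * a * z ^ n := by
  rcases n with _ | n
  · simp [theta0]
  · simp only [theta0, deriv_const_mul_field', deriv_pow_field]
    push_cast
    ring

theorem theta0_tsum_mul_pow {ι : Type*} {a : ι → ℂ} {e : ι → ℕ}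
    (ha : ∀ ρ : ℝ, 0 ≤ ρ → ρ < 1 → Summable fun i => ‖a i‖ * ρ ^ e i) {z : ℂ} (hz : ‖z‖ < 1) :
    theta0 (fun w => ∑' i, a i * w ^ e i) z = ∑' i, e i * a i * z ^ e i := by
  obtain ⟨ρ, hzρ, hρ⟩ := exists_between hz
  have hbound : ∀ i, ∀ w ∈ Metric.ball (0 : ℂ) ρ, ‖a i * w ^ e i‖ ≤ ‖a i‖ * ρ ^ e i :=
    fun i w hw => by
      rw [norm_mul, norm_pow]
      gcongr
      exact (mem_ball_zero_iff.1 hw).le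
  have hderiv := Complex.hasSum_deriv_of_summable_norm (ha ρ ((norm_nonneg z).trans hzρ.le) hρ)
    (fun i => by fun_prop) Metric.isOpen_ball hbound (mem_ball_zero_iff.2 hzρ)
  rw [theta0, ← hderiv.tsum_eq, ← tsum_mul_left]
  exact tsum_congr fun i => theta0_const_mul_pow (a i) z (e i)

namespace LiNeg

abbrev Chain (r : ℕ) := {n : Fin r → ℕ // StrictAnti n ∧ ∀ i, 0 < n i}

namespace Chain

variable {r : ℕ}

/-- `0` for the empty chain, so that `z ^ top m` is the last factor in the definition of
`LiNeg`. -/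
def top (m : Chain r) : ℕ := if h : 0 < r then m.1 ⟨0, h⟩ else 0

theorem top_succ (c : Chain (r + 1)) : top c = c.1 0 := dif_pos r.succ_pos

theorem apply_le_top (m : Chain r) (i : Fin r) : m.1 i ≤ top m := by
  rw [top, dif_pos i.pos]
  exact m.2.1.antitone (show ⟨0, i.pos⟩ ≤ i from Nat.zero_le _)

def tail (c : Chain (r + 1)) : Chain r :=
  ⟨fun i => c.1 i.succ, fun _ _ hij => c.2.1 (Fin.succ_lt_succ_iff.2 hij), fun _ => c.2.2 _⟩

theorem top_tail_lt (c : Chain (r + 1)) : top (tail c) < top c := by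
  rw [top_succ, top]
  split
  · exact c.2.1 (Fin.succ_pos _)
  · exact c.2.2 0

def cons (n : ℕ) (m : Chain r) (h : top m < n) : Chain (r + 1) := by
  refine ⟨Fin.cons n m.1, fun i j hij => ?_, Fin.cases (Nat.zero_lt_of_lt h) m.2.2⟩
  induction j using Fin.cases with
  | zero => exact absurd hij (Fin.not_lt_zero i)
  | succ j =>
    induction i using Fin.cases with
    | zero => exact (m.apply_le_top j).trans_lt h
    | succ i => exact m.2.1 (Fin.succ_lt_succ_iff.1 hij)

@[simp]
theorem coe_cons (n : ℕ) (m : Chain r) (h : top m < n) : (cons n m h).1 = Fin.cons n m.1 := rfl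

@[simp]
theorem tail_cons (n : ℕ) (m : Chain r) (h : top m < n) : tail (cons n m h) = m := rfl

@[simp]
theorem top_cons (n : ℕ) (m : Chain r) (h : top m < n) : top (cons n m h) = n := top_succ _

def succEquiv : Chain (r + 1) ≃ Chain r × ℕ where
  toFun c := (tail c, top c - top (tail c) - 1)
  invFun p := cons (top p.1 + 1 + p.2) p.1 (by omega)
  left_inv c := by
    have := top_tail_lt c
    refine Subtype.ext ((congrArg₂ Fin.cons ?_ rfl).trans (Fin.cons_self_tail c.1))
    change top (tail c) + 1 + (top c - top (tail c) - 1) = c.1 0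
    rw [← top_succ]
    omega
  right_inv p := Prod.ext rfl (by simp; omega)

theorem card_filter_top_eq_le (F : Finset (Chain (r + 1))) (b : ℕ) :
    #{c ∈ F | top c = b} ≤ b ^ r := by
  classical
  simpa using Finset.card_le_card_of_injOn (fun c i => (tail c).1 i)
    (t := Fintype.piFinset fun _ : Fin r => range b)
    (fun c hc => by
      rw [Finset.mem_coe, Finset.mem_filter] at hc
      simpa [← hc.2] using fun i => (apply_le_top _ i).trans_lt (top_tail_lt c))
    (fun c hc d hd hcd => by
      rw [Finset.mem_coe, Finset.mem_filter] at hc hd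
      have htail : tail c = tail d := Subtype.ext hcd
      exact succEquiv.injective (by simp [succEquiv, htail, hc.2, hd.2]))

end Chain

theorem summable_norm_prod_mul_pow {r : ℕ} (S : Fin (r + 1) → ℕ) {ρ : ℝ} (h0 : 0 ≤ ρ)
    (h1 : ρ < 1) :
    Summable fun c : Chain (r + 1) => ‖∏ i, (c.1 i : ℂ) ^ S i‖ * ρ ^ c.top := by
  have hg : Summable fun b : ℕ => ((b ^ r : ℕ) : ℝ) * ((b : ℝ) ^ (∑ i, S i) * ρ ^ b) := by
    simpa [pow_add, mul_assoc] using
      summable_pow_mul_geometric_of_norm_lt_one (r + ∑ i, S i) (by rwa [Real.norm_of_nonneg h0])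
  refine (summable_comp_of_card_filter_le (fun b => by positivity) Chain.card_filter_top_eq_le
    hg).of_nonneg_of_le (fun c => by positivity) fun c => ?_
  gcongr
  rw [norm_prod, ← prod_pow_eq_pow_sum]
  gcongr with i
  rw [norm_pow, Complex.norm_natCast]
  gcongr
  exact_mod_cast Chain.apply_le_top c i

theorem summable_prod_mul_pow {r : ℕ} (S : Fin (r + 1) → ℕ) {z : ℂ} (hz : ‖z‖ < 1) :
    Summable fun c : Chain (r + 1) => (∏ i, (c.1 i : ℂ) ^ S i) * z ^ c.top :=
  Summable.of_norm <| by
    simpa only [norm_mul, norm_pow] using summable_norm_prod_mul_pow S (norm_nonneg z) hz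

end LiNeg

open LiNeg

theorem liNeg_eq_tsum (r : ℕ) (s : Fin r → ℕ) (z : ℂ) :
    LiNeg r s z = ∑' m : Chain r, (∏ i, (m.1 i : ℂ) ^ s i) * z ^ m.top := by
  refine tsum_congr fun m => congrArg _ ?_
  rw [Chain.top]
  split <;> simp

theorem liNeg_cons_zero {r : ℕ} (s : Fin r → ℕ) {z : ℂ} (hz : ‖z‖ < 1) :
    LiNeg (r + 1) (Fin.cons 0 s) z = z / (1 - z) * LiNeg r s z := by
  have hterm : ∀ p : Chain r × ℕ,
      (∏ i, ((Chain.succEquiv.symm p).1 i : ℂ) ^ (Fin.cons 0 s : Fin (r + 1) → ℕ) i) *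
        z ^ (Chain.succEquiv.symm p).top =
      (∏ i, (p.1.1 i : ℂ) ^ s i) * z ^ p.1.top * z * z ^ p.2 := by
    intro p
    simp [Chain.succEquiv, Fin.prod_univ_succ, pow_add, mul_assoc]
  have hsum : Summable fun p : Chain r × ℕ =>
      (∏ i, (p.1.1 i : ℂ) ^ s i) * z ^ p.1.top * z * z ^ p.2 := by
    simpa only [← hterm, Function.comp_def] using
      (Chain.succEquiv.symm.summable_iff).2 (summable_prod_mul_pow (Fin.cons 0 s) hz)
  rw [liNeg_eq_tsum, liNeg_eq_tsum, ← Chain.succEquiv.symm.tsum_eq]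
  simp only [hterm]
  rw [hsum.tsum_prod]
  simp only [tsum_mul_left, tsum_geometric_of_norm_lt_one hz]
  rw [← tsum_mul_left]
  exact tsum_congr fun m => by ring

theorem liNeg_cons_succ {r : ℕ} (t : ℕ) (s : Fin r → ℕ) {z : ℂ} (hz : ‖z‖ < 1) :
    LiNeg (r + 1) (Fin.cons (t + 1) s) z = theta0 (LiNeg (r + 1) (Fin.cons t s)) z := by
  rw [funext (liNeg_eq_tsum (r + 1) (Fin.cons t s)),
    theta0_tsum_mul_pow (fun ρ h0 h1 => summable_norm_prod_mul_pow _ h0 h1) hz, liNeg_eq_tsum]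
  refine tsum_congr fun c => ?_
  simp only [Fin.prod_univ_succ, Fin.cons_zero, Fin.cons_succ, Chain.top_succ, pow_succ]
  ring

/-- For nonnegative integers `s₁, …, s_r` and `|z| < 1`,
`Li⁻_{s₁,s₂,…,s_r}(z) = θ₀^{s₁}(λ · Li⁻_{s₂,…,s_r})(z)`, where `λ(z) = z/(1−z)`. -/
theorem liNeg_cons_eq_theta0_iter_lambda_mul
    (r : ℕ) (s₁ : ℕ) (s : Fin r → ℕ) (z : ℂ) (hz : ‖z‖ < 1) :
    LiNeg (r + 1) (Fin.cons s₁ s) z =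
      (theta0^[s₁] fun w => w / (1 - w) * LiNeg r s w) z := by
  suffices Set.EqOn (LiNeg (r + 1) (Fin.cons s₁ s))
      (theta0^[s₁] fun w => w / (1 - w) * LiNeg r s w) (Metric.ball 0 1) from
    this (mem_ball_zero_iff.2 hz)
  induction s₁ with
  | zero => exact fun w hw => liNeg_cons_zero s (mem_ball_zero_iff.1 hw)
  | succ t ih =>
    intro w hw
    rw [Function.iterate_succ_apply', liNeg_cons_succ t s (mem_ball_zero_iff.1 hw)]
    exact eqOn_theta0 ih Metric.isOpen_ball hw
end

section
/- For every r ≥ 1 and every multi-index (s₁,…,s_r) of nonnegative integers, there exists a polynomial P with rational coefficients such that for all complex z with |z| < 1, Σ_{n₁>…>n_r>0} n₁^{s₁}⋯n_r^{s_r} z^{n₁} = P(1/(1−z)). In other words, every polylogarithm at negative multi-indices Li^-_{s₁,…,s_r} belongs to the polynomial ring ℂ[1/(1−z)]. -/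
open Finset Polynomial fwdDiff

theorem Polynomial.exists_eval_eq_sum_range (Q : ℚ[X]) :
    ∃ P : ℚ[X], ∀ N : ℕ, P.eval (N : ℚ) = ∑ j ∈ range N, Q.eval (j : ℚ) := by
  induction Q using Polynomial.induction_on' with
  | add Q₁ Q₂ h₁ h₂ =>
    obtain ⟨P₁, hP₁⟩ := h₁
    obtain ⟨P₂, hP₂⟩ := h₂
    exact ⟨P₁ + P₂, fun N => by simp [hP₁, hP₂, sum_add_distrib]⟩
  | monomial k a =>
    refine ⟨C (a / (k + 1)) * (bernoulli (k + 1) - C (_root_.bernoulli (k + 1))), fun N => ?_⟩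
    have faulhaber := sum_range_pow_eq_bernoulli_sub N k
    simp only [eval_mul, eval_C, eval_sub, eval_monomial, ← mul_sum, ← faulhaber]
    field_simp

theorem Polynomial.eval_natCast_eq_sum_choose_mul_fwdDiff {R : Type*} [CommRing R] (Q : R[X])
    (N : ℕ) :
    Q.eval (N : R) = ∑ k ∈ range (Q.natDegree + 1), (N.choose k : R) * Δ_[1] ^[k] Q.eval 0 := by
  have newton := shift_eq_sum_fwdDiff_iter (1 : R) Q.eval N 0
  simp only [zero_add, nsmul_eq_mul, mul_one] at newton
  rw [newton, sum_subset (range_subset_range.2 (by omega : N + 1 ≤ N + Q.natDegree + 1)),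
    ← sum_subset (range_subset_range.2 (by omega : Q.natDegree + 1 ≤ N + Q.natDegree + 1))]
  · intro k _ hk
    rw [fwdDiff_iter_eq_zero_of_degree_lt (by simpa using hk), Pi.zero_apply, mul_zero]
  · intro k _ hk
    rw [Nat.choose_eq_zero_of_lt (by simpa using hk), Nat.cast_zero, zero_mul]

section GeneratingFunction

variable {𝕂 : Type*} [NormedField 𝕂] {z : 𝕂}

theorem hasSum_choose_mul_pow_succ (k : ℕ) (hz : ‖z‖ < 1) :
    HasSum (fun N : ℕ => (N.choose k : 𝕂) * z ^ (N + 1)) ((z / (1 - z)) ^ (k + 1)) := by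
  rw [← hasSum_nat_add_iff' k, sum_eq_zero fun i hi => by
    rw [Nat.choose_eq_zero_of_lt (mem_range.1 hi), Nat.cast_zero, zero_mul], sub_zero]
  rw [div_pow, ← mul_one_div]
  exact ((hasSum_choose_mul_geometric_of_norm_lt_one k hz).mul_left _).congr_fun fun N => by ring

/-- The polynomial `P` with `∑ N, Q(N) z^(N+1) = P(1/(1-z))` (see `hasSum_eval_mul_pow_succ`):
the coefficient `Δᵏ Q (0)` of `Q` in Newton's binomial basis multiplies
`∑ N, (N choose k) z^(N+1) = (z/(1-z))^(k+1) = (1/(1-z) - 1)^(k+1)`. -/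
noncomputable def genFunPoly (Q : ℚ[X]) : ℚ[X] :=
  ∑ k ∈ range (Q.natDegree + 1), C (Δ_[1] ^[k] Q.eval 0) * (X - 1) ^ (k + 1)

theorem hasSum_eval_mul_pow_succ [CharZero 𝕂] (Q : ℚ[X]) (hz : ‖z‖ < 1) :
    HasSum (fun N : ℕ => ((Q.eval (N : ℚ) : ℚ) : 𝕂) * z ^ (N + 1))
      (aeval (1 / (1 - z)) (genFunPoly Q)) := by
  have h1z : 1 - z ≠ 0 := sub_ne_zero.2 fun h => by simp [← h] at hz
  have hw : 1 / (1 - z) - 1 = z / (1 - z) := by field_simp; ring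
  simp only [genFunPoly, map_sum, map_mul, aeval_C, map_pow, map_sub, aeval_X, map_one, hw,
    eq_ratCast]
  refine (hasSum_sum fun k _ => (hasSum_choose_mul_pow_succ k hz).mul_left
    ((Δ_[1] ^[k] Q.eval 0 : ℚ) : 𝕂)).congr_fun fun N => ?_
  rw [Q.eval_natCast_eq_sum_choose_mul_fwdDiff, Rat.cast_sum, sum_mul]
  push_cast
  exact sum_congr rfl fun k _ => by ring

end GeneratingFunction

theorem Fin.strictAnti_cons {α : Type*} [Preorder α] {n : ℕ} {f : Fin n → α} {a : α} :
    StrictAnti (Fin.cons a f : Fin (n + 1) → α) ↔ (∀ j, f j < a) ∧ StrictAnti f :=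
  Fin.liftFun_cons (· > ·)

def strictAntiTuples (r N : ℕ) : Finset (Fin r → ℕ) :=
  {n ∈ Fintype.piFinset fun _ => Ioo 0 N | StrictAnti n}

theorem mem_strictAntiTuples {r N : ℕ} {n : Fin r → ℕ} :
    n ∈ strictAntiTuples r N ↔ StrictAnti n ∧ ∀ i, 0 < n i ∧ n i < N := by
  simp [strictAntiTuples, and_comm]

theorem mem_strictAntiTuples_succ {r N : ℕ} {n : Fin (r + 1) → ℕ} :
    n ∈ strictAntiTuples (r + 1) N ↔
      0 < n 0 ∧ n 0 < N ∧ Fin.tail n ∈ strictAntiTuples r (n 0) := by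
  rw [← Fin.cons_self_tail n]
  simp only [mem_strictAntiTuples, Fin.strictAnti_cons, Fin.forall_fin_succ, Fin.cons_zero,
    Fin.cons_succ, Fin.tail_cons]
  grind

theorem strictAnti_and_pos_iff {r : ℕ} {n : Fin (r + 1) → ℕ} :
    (StrictAnti n ∧ ∀ i, 0 < n i) ↔ 0 < n 0 ∧ Fin.tail n ∈ strictAntiTuples r (n 0) := by
  rw [← Fin.cons_self_tail n]
  simp only [mem_strictAntiTuples, Fin.strictAnti_cons, Fin.forall_fin_succ, Fin.cons_zero,
    Fin.cons_succ, Fin.tail_cons]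
  grind

def multiplePowerSum (r : ℕ) (s : Fin r → ℕ) (N : ℕ) : ℕ :=
  ∑ n ∈ strictAntiTuples r N, ∏ i, n i ^ s i

theorem multiplePowerSum_zero (s : Fin 0 → ℕ) (N : ℕ) : multiplePowerSum 0 s N = 1 := by
  simp [multiplePowerSum, strictAntiTuples, Subsingleton.strictAnti]

theorem multiplePowerSum_succ (r : ℕ) (s : Fin (r + 1) → ℕ) (N : ℕ) :
    multiplePowerSum (r + 1) s N =
      ∑ j ∈ Ioo 0 N, j ^ s 0 * multiplePowerSum r (Fin.tail s) j := by
  simp only [multiplePowerSum, mul_sum]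
  rw [sum_sigma']
  refine sum_nbij' (fun n => ⟨n 0, Fin.tail n⟩) (fun p => Fin.cons p.1 p.2) ?_ ?_ ?_ ?_ ?_
  · intro n hn
    rw [mem_strictAntiTuples_succ] at hn
    simpa [and_assoc] using hn
  · rintro ⟨j, m⟩ h
    simp_all [mem_strictAntiTuples_succ]
  · simp
  · simp
  · intro n _
    simp [Fin.prod_univ_succ, Fin.tail]

theorem exists_multiplePowerSum_succ_eq_eval (r : ℕ) (s : Fin r → ℕ) :
    ∃ Q : ℚ[X], ∀ N : ℕ, (multiplePowerSum r s (N + 1) : ℚ) = Q.eval (N : ℚ) := by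
  induction r with
  | zero => exact ⟨1, fun N => by simp [multiplePowerSum_zero]⟩
  | succ r ih =>
    obtain ⟨Q, hQ⟩ := ih (Fin.tail s)
    obtain ⟨P, hP⟩ := ((X + 1) ^ s 0 * Q).exists_eval_eq_sum_range
    refine ⟨P, fun N => ?_⟩
    rw [hP, multiplePowerSum_succ, ← Ico_add_one_left_eq_Ioo, sum_Ico_eq_sum_range]
    push_cast
    simp [hQ, add_comm]

def strictAntiPosEquivSigma (r : ℕ) :
    {n : Fin (r + 1) → ℕ // StrictAnti n ∧ ∀ i, 0 < n i} ≃ Σ j : ℕ, strictAntiTuples r (j + 1) where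
  toFun n := ⟨n.1 0 - 1, Fin.tail n.1, by
    obtain ⟨hpos, htail⟩ := strictAnti_and_pos_iff.1 n.2
    rwa [Nat.sub_add_cancel hpos]⟩
  invFun p := ⟨Fin.cons (p.1 + 1) p.2, strictAnti_and_pos_iff.2 (by simp)⟩
  left_inv n := Subtype.ext <| by
    simp only [Nat.sub_add_cancel (n.2.2 0), Fin.cons_self_tail]
  right_inv p := Sigma.subtype_ext (by simp) (by simp)

theorem hasSum_sigma_natCast_mul_pow {𝕂 : Type*} [RCLike 𝕂] {β : ℕ → Type*}
    [∀ j, Fintype (β j)] (w : (Σ j, β j) → ℕ) (R : ℚ[X])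
    (hR : ∀ j : ℕ, ((∑ b, w ⟨j, b⟩ : ℕ) : ℚ) = R.eval (j : ℚ)) {z : 𝕂} (hz : ‖z‖ < 1) :
    HasSum (fun p : Σ j, β j => (w p : 𝕂) * z ^ (p.1 + 1))
      (aeval (1 / (1 - z)) (genFunPoly R)) := by
  -- The fibre sums of the norms form the same kind of series, over `ℝ` and at `‖z‖`.
  have hnorm : Summable fun p : Σ j, β j => ‖(w p : 𝕂) * z ^ (p.1 + 1)‖ := by
    simp only [norm_mul, norm_pow, RCLike.norm_natCast]
    refine (summable_sigma_of_nonneg fun p => by positivity).2 ⟨fun j => Summable.of_finite, ?_⟩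
    refine (hasSum_eval_mul_pow_succ R (z := ‖z‖) (by simpa using hz)).summable.congr fun j => ?_
    rw [tsum_fintype]
    dsimp only
    rw [← sum_mul, ← Nat.cast_sum, ← hR, Rat.cast_natCast]
  have hsum := hnorm.of_norm.hasSum
  have hfiber : (fun j => ∑ b, (w ⟨j, b⟩ : 𝕂) * z ^ (j + 1)) =
      fun j : ℕ => ((R.eval (j : ℚ) : ℚ) : 𝕂) * z ^ (j + 1) := by
    ext j
    rw [← sum_mul, ← Nat.cast_sum, ← Rat.cast_natCast, hR]
  rwa [(hasSum_eval_mul_pow_succ R hz).unique (hfiber ▸ hsum.sigma fun j => hasSum_fintype _)]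

/-- For every `r ≥ 1` and every multi-index `(s₁,…,s_r)` of nonnegative
integers, there is a polynomial `P` with rational coefficients such that for all `|z| < 1`,
`Li⁻_{s₁,…,s_r}(z) = P(1/(1−z))`; i.e. every polylogarithm at negative multi-indices lies
in `ℂ[1/(1−z)]`. -/
theorem liNeg_mem_polynomial_ring_of_inv_one_sub
    (r : ℕ) (hr : 1 ≤ r) (s : Fin r → ℕ) :
    ∃ P : Polynomial ℚ, ∀ z : ℂ, ‖z‖ < 1 →
      LiNeg r s z = Polynomial.aeval (1 / (1 - z)) P := by
  obtain ⟨r, rfl⟩ : ∃ k, r = k + 1 := ⟨r - 1, by omega⟩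
  obtain ⟨Q, hQ⟩ := exists_multiplePowerSum_succ_eq_eval r (Fin.tail s)
  refine ⟨genFunPoly ((X + 1) ^ s 0 * Q), fun z hz => ?_⟩
  have h := hasSum_sigma_natCast_mul_pow
    (fun p : Σ j, strictAntiTuples r (j + 1) => (p.1 + 1) ^ s 0 * ∏ i, p.2.1 i ^ s i.succ)
    ((X + 1) ^ s 0 * Q) (fun j => ?_) hz
  · simp only [LiNeg, dif_pos (Nat.add_one_pos r)]
    refine ((strictAntiPosEquivSigma r).symm.hasSum_iff.1 (h.congr_fun fun p => ?_)).tsum_eq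
    simp [strictAntiPosEquivSigma, Fin.prod_univ_succ]
  · rw [sum_coe_sort (strictAntiTuples r (j + 1)) fun m => (j + 1) ^ s 0 * ∏ i, m i ^ s i.succ,
      ← mul_sum]
    push_cast
    simp [← hQ, multiplePowerSum, Fin.tail]
end
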